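/- Let R be a commutative ring, n ≥ 1 a natural number, and a_0, a_1, ..., a_n elements of R. Then the sum over all tuples (i_1, ..., i_n) of nonnegative integers with i_1 + ... + i_n = n of the element a_{i_1} * a_{i_2} * ... * a_{i_n} * (i_n - 1) is zero in R (where i_n - 1 ∈ ℤ acts on R by integer scalar multiplication). -/

import Mathlib

/-!
The weighted sum `∑ (x j - 1) • ∏ a (x i)` over compositions does not depend on the slot `j`,
since a transposition of slots permutes the compositions and fixes the product. Summing over
all `k` slots therefore gives `k` times the sum, while the weights add up to `n - k` for every
composition of `n` into `k` parts; for `k = n` this vanishes. Hence `n` times the sum is zero,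
which forces the sum itself to vanish in the torsion-free ring `MvPolynomial ℕ ℤ`, and the
identity for arbitrary `R` and `a` is the image of that universal one under evaluation at `a`.
-/

open Finset Finset.Nat

section
variable {R : Type*} [CommRing R] {k n : ℕ}

theorem sum_antidiagonalTuple_comp_perm {M : Type*} [AddCommMonoid M] (σ : Equiv.Perm (Fin k))
    (f : (Fin k → ℕ) → M) :
    ∑ x ∈ antidiagonalTuple k n, f (x ∘ σ) = ∑ x ∈ antidiagonalTuple k n, f x := by
  have mem_comp {x : Fin k → ℕ} (τ : Equiv.Perm (Fin k)) (hx : x ∈ antidiagonalTuple k n) :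
      x ∘ τ ∈ antidiagonalTuple k n := by
    rw [mem_antidiagonalTuple] at hx ⊢
    exact (Equiv.sum_comp τ x).trans hx
  refine sum_nbij' (· ∘ σ) (· ∘ σ.symm) (fun x hx => mem_comp σ hx)
    (fun x hx => mem_comp σ.symm hx) ?_ ?_ (fun _ _ => rfl)
  · intro x _
    ext i
    simp
  · intro x _
    ext i
    simp

theorem sum_antidiagonalTuple_smul_prod_apply_eq (a : ℕ → R) (g : ℕ → ℤ) (j j' : Fin k) :
    ∑ x ∈ antidiagonalTuple k n, g (x j) • ∏ i, a (x i)
      = ∑ x ∈ antidiagonalTuple k n, g (x j') • ∏ i, a (x i) := by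
  rw [← sum_antidiagonalTuple_comp_perm (Equiv.swap j j')]
  refine sum_congr rfl fun x _ => ?_
  rw [Function.comp_apply, Equiv.swap_apply_left]
  congr 1
  exact Equiv.prod_comp (Equiv.swap j j') fun i => a (x i)

theorem nsmul_sum_antidiagonalTuple_sub_one_smul_prod (a : ℕ → R) (j : Fin k) :
    k • ∑ x ∈ antidiagonalTuple k n, ((x j : ℤ) - 1) • ∏ i, a (x i)
      = ((n : ℤ) - k) • ∑ x ∈ antidiagonalTuple k n, ∏ i, a (x i) := by
  have weights_sum {x : Fin k → ℕ} (hx : x ∈ antidiagonalTuple k n) :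
      ∑ j' : Fin k, ((x j' : ℤ) - 1) = n - k := by
    rw [mem_antidiagonalTuple] at hx
    simp [sum_sub_distrib, ← Nat.cast_sum, hx]
  calc k • ∑ x ∈ antidiagonalTuple k n, ((x j : ℤ) - 1) • ∏ i, a (x i)
      = ∑ j' : Fin k, ∑ x ∈ antidiagonalTuple k n, ((x j' : ℤ) - 1) • ∏ i, a (x i) := by
        rw [sum_congr rfl fun j' _ =>
          sum_antidiagonalTuple_smul_prod_apply_eq a (fun m => (m : ℤ) - 1) j' j,
          sum_const, card_univ, Fintype.card_fin]
    _ = ∑ x ∈ antidiagonalTuple k n, (∑ j' : Fin k, ((x j' : ℤ) - 1)) • ∏ i, a (x i) := by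
        rw [sum_comm]
        simp only [sum_smul]
    _ = ((n : ℤ) - k) • ∑ x ∈ antidiagonalTuple k n, ∏ i, a (x i) := by
        rw [smul_sum]
        exact sum_congr rfl fun x hx => by rw [weights_sum hx]

theorem sum_antidiagonalTuple_sub_one_smul_prod_eq_zero [IsAddTorsionFree R] (a : ℕ → R)
    (j : Fin n) :
    ∑ x ∈ antidiagonalTuple n n, ((x j : ℤ) - 1) • ∏ i, a (x i) = 0 := by
  have h := nsmul_sum_antidiagonalTuple_sub_one_smul_prod (n := n) a j
  rw [sub_self, zero_smul, nsmul_eq_zero_iff] at h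
  exact h.resolve_right j.pos.ne'

end

theorem comp_sum_vanishing {R : Type*} [CommRing R] (n : ℕ) (hn : 1 ≤ n) (a : ℕ → R) :
    ∑ x ∈ Finset.Nat.antidiagonalTuple n n,
      ((x ⟨n - 1, by omega⟩ : ℤ) - 1) • ∏ i, a (x i) = 0 := by
  have universal := sum_antidiagonalTuple_sub_one_smul_prod_eq_zero
    (R := MvPolynomial ℕ ℤ) MvPolynomial.X (⟨n - 1, by omega⟩ : Fin n)
  simpa [map_sum, map_zsmul, map_prod] using
    congrArg (MvPolynomial.eval₂Hom (Int.castRingHom R) a) universal
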